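/- arXiv:1905.04873 — 2 statements merged into one kernel-verified Lean document; each statement's English description precedes it below -/
import Mathlib

section
/- Let F be a non-decreasing submodular function with F(∅)=0 and F({i})>0 for all i, and let Ω(θ) = sup_{s ∈ |P|(F)} sᵀθ be the support function of the symmetric submodular polyhedron. Then Ω is a norm on ℝ^p. -/
/-- The support function of the symmetric submodular polyhedron of a non-decreasing
submodular function with strictly positive singleton values is a norm on ℝ^p. -/
theorem support_function_is_norm (p : ℕ) (F : Finset (Fin p) → ℝ)
    (hmono : ∀ A B : Finset (Fin p), A ⊆ B → F A ≤ F B)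
    (hsub : ∀ A B : Finset (Fin p), F A + F B ≥ F (A ∪ B) + F (A ∩ B))
    (h0 : F ∅ = 0) (hsing : ∀ i : Fin p, 0 < F {i})
    (Ω : (Fin p → ℝ) → ℝ)
    (hΩ : ∀ θ, Ω θ = sSup ((fun s : Fin p → ℝ => ∑ i, s i * θ i) ''
        {s : Fin p → ℝ | ∀ A : Finset (Fin p), ∑ i ∈ A, |s i| ≤ F A})) :
    (∀ θ, 0 ≤ Ω θ) ∧
    (∀ θ, Ω θ = 0 ↔ θ = 0) ∧
    (∀ (c : ℝ) (θ : Fin p → ℝ), Ω (c • θ) = |c| * Ω θ) ∧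
    (∀ θ θ' : Fin p → ℝ, Ω (θ + θ') ≤ Ω θ + Ω θ') := by
  set K : Set (Fin p → ℝ) :=
    {s : Fin p → ℝ | ∀ A : Finset (Fin p), ∑ i ∈ A, |s i| ≤ F A} with hKdef
  have hFnonneg : ∀ A, 0 ≤ F A := fun A => h0 ▸ hmono ∅ A (Finset.empty_subset A)
  have h0K : (0 : Fin p → ℝ) ∈ K := by
    intro A
    simp [hFnonneg A]
  have hsing_le : ∀ s ∈ K, ∀ i, |s i| ≤ F {i} := by
    intro s hs i
    have := hs {i}
    simpa using this
  have hbound : ∀ θ : Fin p → ℝ, ∀ s ∈ K,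
      ∑ i, s i * θ i ≤ ∑ i : Fin p, F {i} * |θ i| := by
    intro θ s hs
    apply Finset.sum_le_sum
    intro i _
    calc s i * θ i ≤ |s i * θ i| := le_abs_self _
      _ = |s i| * |θ i| := abs_mul _ _
      _ ≤ F {i} * |θ i| :=
        mul_le_mul_of_nonneg_right (hsing_le s hs i) (abs_nonneg _)
  have hbdd : ∀ θ : Fin p → ℝ, BddAbove ((fun s : Fin p → ℝ => ∑ i, s i * θ i) '' K) := by
    intro θ
    refine ⟨∑ i : Fin p, F {i} * |θ i|, ?_⟩
    rintro x ⟨s, hs, rfl⟩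
    exact hbound θ s hs
  have hne : ∀ θ : Fin p → ℝ, ((fun s : Fin p → ℝ => ∑ i, s i * θ i) '' K).Nonempty :=
    fun θ => ⟨_, Set.mem_image_of_mem _ h0K⟩
  -- each member value is ≤ Ω θ
  have hleΩ : ∀ θ : Fin p → ℝ, ∀ s ∈ K, ∑ i, s i * θ i ≤ Ω θ := by
    intro θ s hs
    rw [hΩ θ]
    exact le_csSup (hbdd θ) ⟨s, hs, rfl⟩
  have hnonneg : ∀ θ, 0 ≤ Ω θ := by
    intro θ
    have := hleΩ θ 0 h0K
    simpa using this
  -- scaling inequality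
  have hscale_le : ∀ (c : ℝ) (θ : Fin p → ℝ), Ω (c • θ) ≤ |c| * Ω θ := by
    intro c θ
    rw [hΩ (c • θ)]
    apply csSup_le (hne _)
    rintro x ⟨s, hs, rfl⟩
    set e : ℝ := if 0 ≤ c then 1 else -1 with he
    have hec : e * c = |c| := by
      rcases le_or_gt 0 c with h | h
      · simp [he, h, abs_of_nonneg h]
      · simp [he, not_le.mpr h, abs_of_neg h]
    have habse : ∀ x : ℝ, |e * x| = |x| := by
      intro x
      rw [abs_mul]
      have h1 : |e| = 1 := by
        rcases le_or_gt 0 c with h | h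
        · simp [he, if_pos h]
        · simp [he, if_neg (not_le.mpr h)]
      rw [h1, one_mul]
    have htK : (fun i => e * s i) ∈ K := by
      intro A
      calc ∑ i ∈ A, |e * s i| = ∑ i ∈ A, |s i| := by simp [habse]
        _ ≤ F A := hs A
    have hval : ∑ i, s i * (c • θ) i = |c| * ∑ i, (e * s i) * θ i := by
      rw [Finset.mul_sum]
      apply Finset.sum_congr rfl
      intro i _
      have hee : e * e = 1 := by
        rcases le_or_gt 0 c with h | h
        · simp [he, if_pos h]
        · simp [he, if_neg (not_le.mpr h)]
      simp only [Pi.smul_apply, smul_eq_mul]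
      linear_combination (e * s i * θ i) * hec - c * s i * θ i * hee
    dsimp only
    rw [hval]
    exact mul_le_mul_of_nonneg_left (hleΩ θ _ htK) (abs_nonneg c)
  have hΩ0 : Ω 0 = 0 := by
    have h1 := hscale_le 0 0
    have h2 := hnonneg 0
    have : (0 : ℝ) • (0 : Fin p → ℝ) = 0 := by simp
    rw [this] at h1
    simp at h1
    linarith
  refine ⟨hnonneg, ?_, ?_, ?_⟩
  · -- definiteness
    intro θ
    constructor
    · intro hΩθ
      funext i
      by_contra hi
      have hi' : θ i ≠ 0 := by simpa using hi
      set e : ℝ := if 0 ≤ θ i then 1 else -1 with he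
      have heθ : e * θ i = |θ i| := by
        rcases le_or_gt 0 (θ i) with h | h
        · simp [he, h, abs_of_nonneg h]
        · simp [he, not_le.mpr h, abs_of_neg h]
      set s : Fin p → ℝ := fun j => if j = i then e * F {i} else 0 with hsdef
      have habs : ∀ j, |s j| = if j = i then F {i} else 0 := by
        intro j
        rcases eq_or_ne j i with rfl | hj
        · have h1 : |e| = 1 := by
            rcases le_or_gt 0 (θ j) with h | h
            · simp [he, if_pos h]
            · simp [he, if_neg (not_le.mpr h)]
          simp [hsdef, abs_mul, h1, abs_of_pos (hsing j)]
        · simp [hsdef, hj]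
      have hsK : s ∈ K := by
        intro A
        rw [Finset.sum_congr rfl (fun j _ => habs j)]
        rw [Finset.sum_ite_eq' A i (fun _ => F {i})]
        by_cases hiA : i ∈ A
        · simpa [hiA] using hmono {i} A (Finset.singleton_subset_iff.mpr hiA)
        · simp [hiA, hFnonneg A]
      have hval : ∑ j, s j * θ j = F {i} * |θ i| := by
        rw [Finset.sum_eq_single i]
        · have hsi : s i = e * F {i} := by simp [hsdef]
          rw [hsi]
          linear_combination F {i} * heθ
        · intro j _ hj; simp [hsdef, hj]
        · intro h; exact absurd (Finset.mem_univ i) h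
      have hpos : 0 < F {i} * |θ i| :=
        mul_pos (hsing i) (abs_pos.mpr hi')
      have := hleΩ θ s hsK
      rw [hval, hΩθ] at this
      linarith
    · rintro rfl; exact hΩ0
  · -- homogeneity
    intro c θ
    rcases eq_or_ne c 0 with rfl | hc
    · simp [hΩ0]
    · apply le_antisymm (hscale_le c θ)
      have h1 : Ω θ ≤ |c⁻¹| * Ω (c • θ) := by
        have := hscale_le c⁻¹ (c • θ)
        rwa [smul_smul, inv_mul_cancel₀ hc, one_smul] at this
      have h2 : |c| * Ω θ ≤ |c| * (|c⁻¹| * Ω (c • θ)) :=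
        mul_le_mul_of_nonneg_left h1 (abs_nonneg c)
      rwa [← mul_assoc, ← abs_mul, mul_inv_cancel₀ hc, abs_one, one_mul] at h2
  · -- triangle inequality
    intro θ θ'
    rw [hΩ (θ + θ')]
    apply csSup_le (hne _)
    rintro x ⟨s, hs, rfl⟩
    have : ∑ i, s i * (θ + θ') i = (∑ i, s i * θ i) + ∑ i, s i * θ' i := by
      rw [← Finset.sum_add_distrib]
      apply Finset.sum_congr rfl
      intro i _
      simp [mul_add]
    dsimp only
    rw [this]
    exact add_le_add (hleΩ θ s hs) (hleΩ θ' s hs)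
end

section
/- The dual norm of Ω∞, defined by Ω∞*(s) = sup{sᵀθ : Ω∞(θ) ≤ 1}, equals max over nonempty A ⊆ V of |s|(A)/F(A), and the unit ball of Ω∞* is exactly the symmetric submodular polyhedron |P|(F). -/
lemma aux_isGreatest (p : ℕ) (hp : 0 < p) (F : Finset (Fin p) → ℝ)
    (hmono : ∀ A B : Finset (Fin p), A ⊆ B → F A ≤ F B)
    (h0 : F ∅ = 0) (hsing : ∀ i : Fin p, 0 < F {i})
    (Ω : (Fin p → ℝ) → ℝ)
    (hΩ : ∀ θ, Ω θ = sSup ((fun s : Fin p → ℝ => ∑ i, s i * θ i) ''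
        {s : Fin p → ℝ | ∀ A : Finset (Fin p), ∑ i ∈ A, |s i| ≤ F A}))
    (Ωd : (Fin p → ℝ) → ℝ)
    (hΩd : ∀ s, Ωd s = sSup ((fun θ : Fin p → ℝ => ∑ i, s i * θ i) ''
        {θ : Fin p → ℝ | Ω θ ≤ 1}))
    (s : Fin p → ℝ) :
    IsGreatest
        {x : ℝ | ∃ A : Finset (Fin p), A.Nonempty ∧ x = (∑ i ∈ A, |s i|) / F A}
        (Ωd s) := by
  set P : Set (Fin p → ℝ) :=
    {s : Fin p → ℝ | ∀ A : Finset (Fin p), ∑ i ∈ A, |s i| ≤ F A} with hPdef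
  -- positivity of F on nonempty sets
  have hFpos : ∀ A : Finset (Fin p), A.Nonempty → 0 < F A := by
    intro A ⟨i, hi⟩
    exact lt_of_lt_of_le (hsing i) (hmono _ _ (Finset.singleton_subset_iff.2 hi))
  -- 0 ∈ P
  have hP0 : (0 : Fin p → ℝ) ∈ P := by
    intro A
    rcases A.eq_empty_or_nonempty with rfl | hA
    · simp [h0]
    · simpa using (hFpos A hA).le
  -- members of P are bounded coordinatewise
  have hPcoord : ∀ t ∈ P, ∀ i, |t i| ≤ F {i} := by
    intro t ht i
    simpa using ht {i}
  -- Ω θ is a sup over a nonempty bddAbove set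
  have hΩ_ge : ∀ θ, ∀ t ∈ P, ∑ i, t i * θ i ≤ Ω θ := by
    intro θ t ht
    rw [hΩ]
    refine le_csSup ⟨∑ i, F {i} * |θ i|, ?_⟩ ⟨t, ht, rfl⟩
    rintro x ⟨u, hu, rfl⟩
    refine Finset.sum_le_sum fun i _ => ?_
    calc u i * θ i ≤ |u i * θ i| := le_abs_self _
      _ = |u i| * |θ i| := abs_mul _ _
      _ ≤ F {i} * |θ i| := by
          exact mul_le_mul_of_nonneg_right (hPcoord u hu i) (abs_nonneg _)
  have hΩ_le : ∀ θ c, (∀ t ∈ P, ∑ i, t i * θ i ≤ c) → Ω θ ≤ c := by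
    intro θ c hc
    rw [hΩ]
    refine csSup_le ⟨0, 0, hP0, by simp⟩ ?_
    rintro x ⟨u, hu, rfl⟩
    exact hc u hu
  -- the maximizing set A₀
  have hne : ({(⟨0, hp⟩ : Fin p)} : Finset (Fin p)) ∈
      (Finset.univ.powerset.filter (fun A : Finset (Fin p) => A.Nonempty)) := by
    simp
  obtain ⟨A₀, hA₀mem, hA₀max⟩ := Finset.exists_max_image
    (Finset.univ.powerset.filter (fun A : Finset (Fin p) => A.Nonempty))
    (fun A => (∑ i ∈ A, |s i|) / F A) ⟨_, hne⟩
  have hA₀ne : A₀.Nonempty := (Finset.mem_filter.1 hA₀mem).2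
  set M : ℝ := (∑ i ∈ A₀, |s i|) / F A₀ with hM
  have hMmax : ∀ A : Finset (Fin p), A.Nonempty → (∑ i ∈ A, |s i|) / F A ≤ M := by
    intro A hA
    exact hA₀max A (Finset.mem_filter.2 ⟨Finset.mem_powerset.2 (Finset.subset_univ A), hA⟩)
  have hMnonneg : 0 ≤ M :=
    div_nonneg (Finset.sum_nonneg fun i _ => abs_nonneg _) (hFpos A₀ hA₀ne).le
  -- every θ in the dual ball satisfies sᵀθ ≤ M
  have hub : ∀ θ : Fin p → ℝ, Ω θ ≤ 1 → ∑ i, s i * θ i ≤ M := by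
    intro θ hθ
    by_cases hs : s = 0
    · simpa [hs] using hMnonneg
    · have hMpos : 0 < M := by
        obtain ⟨i, hi⟩ := Function.ne_iff.1 hs
        have h1 : 0 < (∑ j ∈ ({i} : Finset (Fin p)), |s j|) / F {i} := by
          apply div_pos (by simpa using abs_pos.2 hi) (hsing i)
        exact lt_of_lt_of_le h1 (hMmax {i} ⟨i, Finset.mem_singleton_self i⟩)
      have htP : (fun i => s i / M) ∈ P := by
        intro A
        rcases A.eq_empty_or_nonempty with rfl | hA
        · simp [h0]
        · have h1 : (∑ i ∈ A, |s i|) / F A ≤ M := hMmax A hA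
          have h2 : (∑ i ∈ A, |s i|) ≤ M * F A := by
            rw [div_le_iff₀ (hFpos A hA)] at h1
            linarith
          calc ∑ i ∈ A, |s i / M| = ∑ i ∈ A, |s i| / M :=
                Finset.sum_congr rfl fun i _ => by rw [abs_div, abs_of_pos hMpos]
            _ = (∑ i ∈ A, |s i|) / M := (Finset.sum_div _ _ _).symm
            _ ≤ F A := by
                rw [div_le_iff₀ hMpos]; linarith
      have h3 : ∑ i, (s i / M) * θ i ≤ 1 := le_trans (hΩ_ge θ _ htP) hθ
      have h4 : ∑ i, (s i / M) * θ i = (∑ i, s i * θ i) / M := by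
        rw [Finset.sum_div]
        exact Finset.sum_congr rfl fun i _ => by ring
      rw [h4, div_le_one hMpos] at h3
      linarith
  -- dual ball is nonempty (contains 0)
  have hΩ0 : Ω 0 ≤ 1 := hΩ_le 0 1 (by intro t ht; simp)
  -- lower bound : for each nonempty A, ratio ≤ Ωd s
  have hge : ∀ A : Finset (Fin p), A.Nonempty → (∑ i ∈ A, |s i|) / F A ≤ Ωd s := by
    intro A hA
    set θ : Fin p → ℝ :=
      fun i => if i ∈ A then (if 0 ≤ s i then (1 : ℝ) else -1) / F A else 0 with hθdef
    have hθball : Ω θ ≤ 1 := by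
      refine hΩ_le θ 1 ?_
      intro t ht
      have h1 : ∑ i, t i * θ i = ∑ i ∈ A, t i * θ i := by
        refine (Finset.sum_subset (Finset.subset_univ A) ?_).symm
        intro i _ hi
        simp [hθdef, hi]
      rw [h1]
      have h2 : ∑ i ∈ A, t i * θ i ≤ ∑ i ∈ A, |t i| / F A := by
        refine Finset.sum_le_sum fun i hi => ?_
        simp only [hθdef, if_pos hi]
        have habs : |(if 0 ≤ s i then (1 : ℝ) else -1) / F A| = 1 / F A := by
          rw [abs_div, abs_of_pos (hFpos A hA)]
          split <;> norm_num
        calc t i * ((if 0 ≤ s i then (1:ℝ) else -1) / F A)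
            ≤ |t i * ((if 0 ≤ s i then (1:ℝ) else -1) / F A)| := le_abs_self _
          _ = |t i| * (1 / F A) := by rw [abs_mul, habs]
          _ = |t i| / F A := by ring
      refine le_trans h2 ?_
      rw [← Finset.sum_div, div_le_one (hFpos A hA)]
      exact ht A
    have hval : ∑ i, s i * θ i = (∑ i ∈ A, |s i|) / F A := by
      have h1 : ∑ i, s i * θ i = ∑ i ∈ A, s i * θ i := by
        refine (Finset.sum_subset (Finset.subset_univ A) ?_).symm
        intro i _ hi
        simp [hθdef, hi]
      rw [h1, Finset.sum_div]
      refine Finset.sum_congr rfl fun i hi => ?_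
      simp only [hθdef, if_pos hi]
      by_cases h : 0 ≤ s i
      · rw [if_pos h, abs_of_nonneg h]; ring
      · rw [if_neg h, abs_of_neg (lt_of_not_ge h)]; ring
    rw [hΩd, ← hval]
    refine le_csSup ⟨M, ?_⟩ ⟨θ, hθball, rfl⟩
    rintro x ⟨u, hu, rfl⟩
    exact hub u hu
  -- Ωd s ≤ M
  have hle : Ωd s ≤ M := by
    rw [hΩd]
    refine csSup_le ⟨0, 0, hΩ0, by simp⟩ ?_
    rintro x ⟨u, hu, rfl⟩
    exact hub u hu
  have heq : Ωd s = M := le_antisymm hle (hge A₀ hA₀ne)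
  constructor
  · exact ⟨A₀, hA₀ne, heq⟩
  · rintro x ⟨A, hA, rfl⟩
    exact le_trans (hMmax A hA) heq.ge


/-- The dual norm of Ω∞ equals the maximum over nonempty A of |s|(A)/F(A), and its unit
ball is the symmetric submodular polyhedron. -/
theorem dual_norm_eq_max_ratio (p : ℕ) (hp : 0 < p) (F : Finset (Fin p) → ℝ)
    (hmono : ∀ A B : Finset (Fin p), A ⊆ B → F A ≤ F B)
    (hsub : ∀ A B : Finset (Fin p), F A + F B ≥ F (A ∪ B) + F (A ∩ B))
    (h0 : F ∅ = 0) (hsing : ∀ i : Fin p, 0 < F {i})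
    (Ω : (Fin p → ℝ) → ℝ)
    (hΩ : ∀ θ, Ω θ = sSup ((fun s : Fin p → ℝ => ∑ i, s i * θ i) ''
        {s : Fin p → ℝ | ∀ A : Finset (Fin p), ∑ i ∈ A, |s i| ≤ F A}))
    (Ωd : (Fin p → ℝ) → ℝ)
    (hΩd : ∀ s, Ωd s = sSup ((fun θ : Fin p → ℝ => ∑ i, s i * θ i) ''
        {θ : Fin p → ℝ | Ω θ ≤ 1})) :
    (∀ s : Fin p → ℝ, IsGreatest
        {x : ℝ | ∃ A : Finset (Fin p), A.Nonempty ∧ x = (∑ i ∈ A, |s i|) / F A}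
        (Ωd s)) ∧
    {s : Fin p → ℝ | Ωd s ≤ 1} =
      {s : Fin p → ℝ | ∀ A : Finset (Fin p), ∑ i ∈ A, |s i| ≤ F A} := by
  have key := aux_isGreatest p hp F hmono h0 hsing Ω hΩ Ωd hΩd
  have hFpos : ∀ A : Finset (Fin p), A.Nonempty → 0 < F A := by
    intro A hA
    obtain ⟨i, hi⟩ := hA
    exact lt_of_lt_of_le (hsing i) (hmono _ _ (Finset.singleton_subset_iff.2 hi))
  refine ⟨key, ?_⟩
  ext s
  simp only [Set.mem_setOf_eq]
  constructor
  · intro h A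
    rcases A.eq_empty_or_nonempty with rfl | hA
    · simp [h0]
    · have h1 : (∑ i ∈ A, |s i|) / F A ≤ Ωd s := (key s).2 ⟨A, hA, rfl⟩
      rw [← div_le_one (hFpos A hA)]
      exact le_trans h1 h
  · intro h
    obtain ⟨A, hA, heq⟩ := (key s).1
    rw [heq, div_le_one (hFpos A hA)]
    exact h A
end
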